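/- arXiv:2103.16067 — 4 statements merged into one kernel-verified Lean document; each statement's English description precedes it below -/
import Mathlib

section
/- Let A ∈ ℝ^{n×n} be a Schur stable matrix, i.e., every eigenvalue of A has modulus strictly less than 1. Then for every symmetric positive definite matrix Q ∈ ℝ^{n×n} there exists a symmetric positive definite matrix P ∈ ℝ^{n×n} satisfying the discrete-time Lyapunov equation AᵀPA − P = −Q. -/
/-!
The solution is `P = ∑ₖ (Aᵀ)ᵏ Q Aᵏ`. By Gelfand's formula, applied to `A` viewed as a complex
matrix, `‖Aᵏ‖ ≤ rᵏ` eventually for some `r < 1`, so the series converges geometrically.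
Multiplying it by `Aᵀ` on the left and `A` on the right shifts it by one term, which is the
Lyapunov equation `AᵀPA = P - Q`. As a limit of positive semidefinite partial sums, `P ⪰ 0`,
hence `P = Q + AᵀPA ≻ 0`.
-/

open Matrix

/-- A real square matrix is Schur stable if every (complex) eigenvalue has
modulus strictly less than one. -/
def SchurStable {n : ℕ} (A : Matrix (Fin n) (Fin n) ℝ) : Prop :=
  ∀ z ∈ spectrum ℂ (A.map (algebraMap ℝ ℂ)), ‖z‖ < 1

open Filter
open scoped NNReal ComplexOrder

theorem Matrix.isClosed_setOf_posSemidef {n 𝕜 : Type*} [Fintype n] [RCLike 𝕜] :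
    IsClosed {M : Matrix n n 𝕜 | M.PosSemidef} := by
  simp only [posSemidef_iff_dotProduct_mulVec, Set.ofPred_and, Set.ofPred_forall]
  refine .inter (isClosed_eq (by fun_prop) continuous_id) (isClosed_iInter fun x => ?_)
  exact isClosed_le continuous_const (by fun_prop)

theorem Matrix.PosSemidef.of_hasSum {ι n 𝕜 : Type*} [Fintype n] [RCLike 𝕜]
    {f : ι → Matrix n n 𝕜} {P : Matrix n n 𝕜} (hf : HasSum f P) (h : ∀ i, (f i).PosSemidef) :
    P.PosSemidef :=
  isClosed_setOf_posSemidef.mem_of_tendsto hf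
    (Eventually.of_forall fun s => posSemidef_sum s fun i _ => h i)

theorem mul_mul_sub_eq_neg_of_hasSum_pow_mul_mul_pow {R : Type*} [Ring R] [TopologicalSpace R]
    [IsTopologicalRing R] [T2Space R] {a b q p : R}
    (h : HasSum (fun k => b ^ k * q * a ^ k) p) : b * p * a - p = -q := by
  have hshift : HasSum (fun k => b ^ (k + 1) * q * a ^ (k + 1)) (b * p * a) :=
    ((h.mul_left b).mul_right a).congr_fun fun k => by
      rw [pow_succ', pow_succ]; simp only [mul_assoc]
  have htail := (hasSum_nat_add_iff' 1).mpr h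
  simp only [Finset.range_one, Finset.sum_singleton, pow_zero, one_mul, mul_one] at htail
  rw [hshift.unique htail]
  abel

theorem spectrum.eventually_nnnorm_pow_le_of_spectralRadius_lt {A : Type*} [NormedRing A]
    [NormedAlgebra ℂ A] [CompleteSpace A] {a : A} {r : ℝ≥0} (h : spectralRadius ℂ a < r) :
    ∀ᶠ k in atTop, ‖a ^ k‖₊ ≤ r ^ k := by
  filter_upwards [(pow_nnnorm_pow_one_div_tendsto_nhds_spectralRadius a).eventually_lt_const h,
    eventually_ne_atTop 0] with k hk hk0
  have := ENNReal.rpow_le_rpow hk.le (z := k) (by positivity)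
  rw [← ENNReal.rpow_mul, one_div_mul_cancel (by exact_mod_cast hk0), ENNReal.rpow_one,
    ENNReal.rpow_natCast] at this
  exact_mod_cast this

theorem spectrum.spectralRadius_lt_one_of_forall_norm_lt_one {A : Type*} [NormedRing A]
    [NormedAlgebra ℂ A] [CompleteSpace A] {a : A} (h : ∀ z ∈ spectrum ℂ a, ‖z‖ < 1) :
    spectralRadius ℂ a < 1 := by
  rcases (spectrum ℂ a).eq_empty_or_nonempty with he | hne
  · simp [spectralRadius, he]
  · simpa using spectralRadius_lt_of_forall_lt_of_nonempty hne (r := 1)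
      fun z hz => by rw [← NNReal.coe_lt_coe, coe_nnnorm, NNReal.coe_one]; exact h z hz

section Frobenius

-- Both the transpose and the entrywise embedding `ℝ → ℂ` are isometries for the Frobenius norm.
open scoped Matrix.Norms.Frobenius

variable {n : ℕ} {A : Matrix (Fin n) (Fin n) ℝ}

theorem SchurStable.exists_lt_one_eventually_nnnorm_pow_le (hA : SchurStable A) :
    ∃ r : ℝ≥0, r < 1 ∧ ∀ᶠ k in atTop, ‖A ^ k‖₊ ≤ r ^ k := by
  obtain ⟨r, hρr, hr1⟩ := ENNReal.lt_iff_exists_nnreal_btwn.mp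
    (spectrum.spectralRadius_lt_one_of_forall_norm_lt_one hA)
  refine ⟨r, mod_cast hr1, ?_⟩
  filter_upwards [spectrum.eventually_nnnorm_pow_le_of_spectralRadius_lt hρr] with k hk
  rwa [← Matrix.map_pow, frobenius_nnnorm_map_eq _ _ fun x => by simp] at hk

theorem SchurStable.summable_transpose_pow_mul_mul_pow (hA : SchurStable A)
    (Q : Matrix (Fin n) (Fin n) ℝ) : Summable fun k => Aᵀ ^ k * Q * A ^ k := by
  obtain ⟨r, hr1, hr⟩ := hA.exists_lt_one_eventually_nnnorm_pow_le
  refine Summable.of_norm_bounded_eventually_nat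
    ((summable_geometric_of_lt_one (by positivity) (pow_lt_one₀ r.2 hr1 two_ne_zero)).mul_left
      ‖Q‖) ?_
  filter_upwards [hr] with k hk
  have hk' : ‖A ^ k‖ ≤ r ^ k := mod_cast hk
  calc ‖Aᵀ ^ k * Q * A ^ k‖ ≤ ‖A ^ k‖ * ‖Q‖ * ‖A ^ k‖ := by
        rw [← transpose_pow]
        refine (norm_mul_le _ _).trans (mul_le_mul_of_nonneg_right ?_ (norm_nonneg _))
        exact (norm_mul_le _ _).trans_eq (by rw [frobenius_norm_transpose])
    _ ≤ r ^ k * ‖Q‖ * r ^ k := by gcongr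
    _ = ‖Q‖ * ((r : ℝ) ^ 2) ^ k := by ring

end Frobenius

/-- **Discrete-time Lyapunov equation.**  If `A` is Schur stable, then for every
symmetric positive definite `Q` there exists a symmetric positive definite `P`
with `AᵀPA - P = -Q`. -/
theorem schur_stable_exists_lyapunov {n : ℕ} (A : Matrix (Fin n) (Fin n) ℝ)
    (hA : SchurStable A) (Q : Matrix (Fin n) (Fin n) ℝ) (hQ : Q.PosDef) :
    ∃ P : Matrix (Fin n) (Fin n) ℝ, P.PosDef ∧ Aᵀ * P * A - P = -Q := by
  obtain ⟨P, hP⟩ := hA.summable_transpose_pow_mul_mul_pow Q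
  have hLyap := mul_mul_sub_eq_neg_of_hasSum_pow_mul_mul_pow hP
  have hPsd : P.PosSemidef := PosSemidef.of_hasSum hP fun k => by
    simpa only [conjTranspose_eq_transpose_of_trivial, transpose_pow] using
      hQ.posSemidef.conjTranspose_mul_mul_same (A ^ k)
  have hPQ : Q + Aᵀ * P * A = P := by rw [← sub_eq_zero, add_sub_assoc, hLyap, add_neg_cancel]
  refine ⟨P, ?_, hLyap⟩
  simpa only [conjTranspose_eq_transpose_of_trivial, hPQ] using
    hQ.add_posSemidef (hPsd.conjTranspose_mul_mul_same A)
end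

section
/- (Willems' Fundamental Lemma, rank version.) Consider the controllable discrete-time linear system x_{k+1} = A x_k + B u_k with x_k ∈ ℝ^n, u_k ∈ ℝ^m. Let (u_{[0,T−1]}, x_{[0,T−1]}) be an input-state trajectory of this system of length T, and let L ∈ ℤ_{>0}, q = T − L + 1. If the input signal u_{[0,T−1]} is persistently exciting of order n + L, then the stacked matrix [U_{L,q}; X_{1,q}] ∈ ℝ^{(Lm+n)×q}, formed from the Hankel matrix U_{L,q} of depth L of the input and the Hankel matrix X_{1,q} of depth 1 of the state, has rank Lm + n. -/
open Matrix

/-- Hankel matrix of depth `t` with `q` columns associated with the signal `z`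
(taking values in `ℝ^σ`): the `((i,s), j)` entry is the `s`-th component of
`z_{i+j}`. -/
def Hankel {σ : ℕ} (z : ℕ → Fin σ → ℝ) (t q : ℕ) :
    Matrix (Fin t × Fin σ) (Fin q) ℝ :=
  Matrix.of fun is j => z (is.1.1 + j.1) is.2

/-- The signal `z_{[0,T-1]}` is persistently exciting of order `t` if its Hankel
matrix of depth `t` with `q = T - t + 1` columns has full row rank `σ t`. -/
def PersistentlyExciting {σ : ℕ} (z : ℕ → Fin σ → ℝ) (T t : ℕ) : Prop :=
  (Hankel z t (T - t + 1)).rank = σ * t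

/-- Controllability matrix `[B, AB, A²B, …, A^{n-1}B]`. -/
def ctrbMatrix {n m : ℕ} (A : Matrix (Fin n) (Fin n) ℝ)
    (B : Matrix (Fin n) (Fin m) ℝ) : Matrix (Fin n) (Fin n × Fin m) ℝ :=
  Matrix.of fun i km => (A ^ (km.1 : ℕ) * B) i km.2

/-!
A vector `(η, ζ)` in the left kernel of `[U_L; X_1]` is a relation
`∑ p, η p ⬝ u (j + p) + ζ ⬝ x j = 0` holding for every column `j`. Pushing it `k` steps through
`x (j + 1) = A x j + B u j` gives a relation with state coefficient `ζ A^k` and input coefficients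
`ζ A^{k-1} B, …, ζ B, η`, a window of the single sequence `f = (ζ A^{n-1} B, …, ζ B, η)`.
Combining the relations for `k = 0, …, n` with the coefficients of the characteristic polynomial
of `A` removes the state term by Cayley–Hamilton, so persistent excitation of order `n + L`
makes the combined input coefficients vanish. As the characteristic polynomial is monic, this is
a linear recurrence that forces `f = 0` from the top down: `η = 0`, and `ζ A^r B = 0` for `r < n`,
whence `ζ = 0` by controllability.
-/

open Finset

theorem Matrix.rank_eq_card_iff_vecMul_eq_zero {ι κ K : Type*} [Fintype ι] [Fintype κ]
    [Field K] (M : Matrix ι κ K) : M.rank = Fintype.card ι ↔ ∀ v, v ᵥ* M = 0 → v = 0 := by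
  rw [rank_eq_finrank_span_row, ← Set.finrank, eq_comm,
    ← linearIndependent_iff_card_eq_finrank_span, ← vecMul_injective_iff, ← coe_vecMulLinear,
    injective_iff_map_eq_zero]
  rfl

theorem Matrix.sum_charpoly_coeff_smul_pow {R : Type*} [CommRing R] [Nontrivial R] {n : ℕ}
    (A : Matrix (Fin n) (Fin n) R) :
    ∑ k ∈ range (n + 1), A.charpoly.coeff k • A ^ k = 0 := by
  simpa [Polynomial.aeval_eq_sum_range] using A.aeval_self_charpoly

theorem eq_zero_of_sum_smul_shift_eq_zero {R M : Type*} [Ring R] [AddCommGroup M] [Module R M]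
    {n N : ℕ} {c : ℕ → R} {f : ℕ → M} (hc : c n = 1) (hf : ∀ i, N ≤ i → f i = 0)
    (hrec : ∀ p < N, ∑ k ∈ range (n + 1), c k • f (p + (n - k)) = 0) (i : ℕ) : f i = 0 := by
  suffices ∀ d i, N ≤ i + d → f i = 0 from this N i (by omega)
  intro d
  induction d with
  | zero => exact hf
  | succ d ih =>
    intro i hi
    by_cases hid : N ≤ i + d
    · exact ih i hid
    have h := hrec i (by omega)
    rwa [sum_range_succ, hc, one_smul, Nat.sub_self, add_zero,
      sum_eq_zero fun k hk => by rw [ih _ (by simp at hk; omega), smul_zero], zero_add] at h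

theorem vecMul_hankel_apply {σ t q : ℕ} (z w : ℕ → Fin σ → ℝ) (j : Fin q) :
    ((fun ps : Fin t × Fin σ => w ps.1 ps.2) ᵥ* Hankel z t q) j
      = ∑ p ∈ range t, w p ⬝ᵥ z (j + p) := by
  simp only [vecMul, dotProduct, Hankel, of_apply, Fintype.sum_prod_type, add_comm (j : ℕ)]
  exact Fin.sum_univ_eq_sum_range (fun p => ∑ s, w p s * z (p + j) s) t

namespace PersistentlyExciting

variable {σ T t : ℕ} {z : ℕ → Fin σ → ℝ}

theorem eq_zero (h : PersistentlyExciting z T t) {w : ℕ → Fin σ → ℝ}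
    (hw : ∀ j < T - t + 1, ∑ p ∈ range t, w p ⬝ᵥ z (j + p) = 0) {p : ℕ} (hp : p < t) :
    w p = 0 := by
  have hker := ((Hankel z t (T - t + 1)).rank_eq_card_iff_vecMul_eq_zero).mp
    (by rw [h]; simp [mul_comm])
  have := hker (fun ps => w ps.1 ps.2) <| funext fun j => by
    rw [vecMul_hankel_apply]
    exact hw j j.isLt
  exact funext fun s => congrFun this (⟨p, hp⟩, s)

/-- Full row rank needs `σ (n + t) ≤ T - (n + t) + 1` columns, which forces `n + t ≤ T`
unless `n = 0`. -/
theorem sub_add_le {n : ℕ} (h : PersistentlyExciting z T (n + t)) (ht : 0 < t)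
    (hn : σ = 0 → n = 0) :
    T - (n + t) + 1 + n ≤ T - t + 1 := by
  have hwidth : σ * (n + t) ≤ T - (n + t) + 1 :=
    h ▸ (Hankel z _ _).rank_le_card_width.trans_eq (Fintype.card_fin _)
  rcases σ.eq_zero_or_pos with hσ | hσ
  · simp [hn hσ]
  · have := Nat.le_mul_of_pos_left (n + t) hσ
    omega

end PersistentlyExciting

section MarkovExtension

variable {R : Type*} [CommRing R] {n m : ℕ} (A : Matrix (Fin n) (Fin n) R)
  (B : Matrix (Fin n) (Fin m) R)

/-- `markovExtension A B ζ η (· + (n - k))` are the input coefficients of the relation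
`(η, ζ)` pushed `k` steps through the dynamics. -/
def markovExtension (ζ : Fin n → R) (η : ℕ → Fin m → R) (i : ℕ) : Fin m → R :=
  if i < n then ζ ᵥ* (A ^ (n - 1 - i) * B) else η (i - n)

variable {A B}

theorem markovExtension_add_dim (ζ : Fin n → R) (η : ℕ → Fin m → R) (p : ℕ) :
    markovExtension A B ζ η (p + n) = η p := by
  simp [markovExtension]

theorem markovExtension_of_lt (ζ : Fin n → R) (η : ℕ → Fin m → R) {i : ℕ} (hi : i < n) :
    markovExtension A B ζ η i = ζ ᵥ* (A ^ (n - 1 - i) * B) :=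
  if_pos hi

theorem markovExtension_eq_zero_of_le {L : ℕ} (ζ : Fin n → R) {η : ℕ → Fin m → R}
    (hη : ∀ p, L ≤ p → η p = 0) {i : ℕ} (hi : n + L ≤ i) : markovExtension A B ζ η i = 0 := by
  rw [markovExtension, if_neg (by omega), hη _ (by omega)]

variable {u : ℕ → Fin m → R} {x : ℕ → Fin n → R}

theorem sum_dotProduct_add_dotProduct_eq_zero_of_succ {g : ℕ → Fin m → R} {ζ : Fin n → R}
    {N j : ℕ} (hx : x (j + 1) = A *ᵥ x j + B *ᵥ u j) (hg : g 0 = ζ ᵥ* B)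
    (h : ∑ p ∈ range N, g (p + 1) ⬝ᵥ u (j + 1 + p) + ζ ⬝ᵥ x (j + 1) = 0) :
    ∑ p ∈ range (N + 1), g p ⬝ᵥ u (j + p) + (ζ ᵥ* A) ⬝ᵥ x j = 0 := by
  rw [← h, sum_range_succ', hg, hx, dotProduct_add, dotProduct_mulVec, dotProduct_mulVec,
    add_zero]
  simp only [add_right_comm j, add_assoc j]
  ring

variable {η : ℕ → Fin m → R} {ζ : Fin n → R} {L q : ℕ}

theorem sum_markovExtension_dotProduct_add_eq_zero
    (htraj : ∀ k, k + 1 < q → x (k + 1) = A *ᵥ x k + B *ᵥ u k)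
    (hrel : ∀ j < q, ∑ p ∈ range L, η p ⬝ᵥ u (j + p) + ζ ⬝ᵥ x j = 0)
    {k : ℕ} (hk : k ≤ n) {j : ℕ} (hj : j + k < q) :
    ∑ p ∈ range (L + k), markovExtension A B ζ η (p + (n - k)) ⬝ᵥ u (j + p)
      + (ζ ᵥ* A ^ k) ⬝ᵥ x j = 0 := by
  induction k generalizing j with
  | zero => simpa [markovExtension_add_dim] using hrel j hj
  | succ k ih =>
    rw [pow_succ, ← vecMul_vecMul]
    refine sum_dotProduct_add_dotProduct_eq_zero_of_succ (N := L + k) (htraj j (by omega)) ?_ ?_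
    · rw [zero_add, markovExtension_of_lt _ _ (by omega), vecMul_vecMul,
        show n - 1 - (n - (k + 1)) = k by omega]
    · convert ih (by omega) (j := j + 1) (by omega) using 4 with p
      congr 1
      omega

theorem sum_charpoly_coeff_smul_markovExtension_dotProduct_eq_zero [Nontrivial R]
    (htraj : ∀ k, k + 1 < q → x (k + 1) = A *ᵥ x k + B *ᵥ u k)
    (hrel : ∀ j < q, ∑ p ∈ range L, η p ⬝ᵥ u (j + p) + ζ ⬝ᵥ x j = 0)
    (hη : ∀ p, L ≤ p → η p = 0) {j : ℕ} (hj : j + n < q) :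
    ∑ p ∈ range (n + L), (∑ k ∈ range (n + 1),
      A.charpoly.coeff k • markovExtension A B ζ η (p + (n - k))) ⬝ᵥ u (j + p) = 0 := by
  have hshift (k : ℕ) (hk : k ∈ range (n + 1)) :
      ∑ p ∈ range (n + L), markovExtension A B ζ η (p + (n - k)) ⬝ᵥ u (j + p)
        = -(ζ ⬝ᵥ A ^ k *ᵥ x j) := by
    have hkn : k ≤ n := Nat.lt_succ_iff.mp (mem_range.mp hk)
    rw [← sum_subset (range_subset_range.mpr (show L + k ≤ n + L by omega)), dotProduct_mulVec,
      eq_neg_iff_add_eq_zero]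
    · exact sum_markovExtension_dotProduct_add_eq_zero htraj hrel hkn (by omega)
    · intro p _ hp
      rw [markovExtension_eq_zero_of_le ζ hη (by simp at hp; omega), zero_dotProduct]
  simp_rw [sum_dotProduct, smul_dotProduct]
  rw [sum_comm, sum_congr rfl fun k hk => by rw [← smul_sum, hshift k hk]]
  simp_rw [smul_neg, sum_neg_distrib, neg_eq_zero, ← dotProduct_smul, ← smul_mulVec,
    ← dotProduct_sum, ← sum_mulVec, sum_charpoly_coeff_smul_pow, zero_mulVec, dotProduct_zero]

end MarkovExtension

section Real

variable {n m : ℕ} {A : Matrix (Fin n) (Fin n) ℝ} {B : Matrix (Fin n) (Fin m) ℝ}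
  {u : ℕ → Fin m → ℝ} {x : ℕ → Fin n → ℝ} {η : ℕ → Fin m → ℝ} {ζ : Fin n → ℝ} {L q : ℕ}

theorem markovExtension_eq_zero {T : ℕ} (hPE : PersistentlyExciting u T (n + L))
    (htraj : ∀ k, k + 1 < q → x (k + 1) = A *ᵥ x k + B *ᵥ u k)
    (hrel : ∀ j < q, ∑ p ∈ range L, η p ⬝ᵥ u (j + p) + ζ ⬝ᵥ x j = 0)
    (hη : ∀ p, L ≤ p → η p = 0) (hq : T - (n + L) + 1 + n ≤ q) (i : ℕ) :
    markovExtension A B ζ η i = 0 :=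
  eq_zero_of_sum_smul_shift_eq_zero (by simpa using A.charpoly_monic.coeff_natDegree)
    (fun _ => markovExtension_eq_zero_of_le ζ hη)
    (fun _ hp => hPE.eq_zero (fun _ hj =>
      sum_charpoly_coeff_smul_markovExtension_dotProduct_eq_zero htraj hrel hη (by omega)) hp) i

theorem vecMul_ctrbMatrix_eq_zero (h : ∀ i, markovExtension A B ζ η i = 0) :
    ζ ᵥ* ctrbMatrix A B = 0 := funext fun ⟨r, s⟩ => by
  have := congrFun (h (n - 1 - r)) s
  rwa [markovExtension_of_lt _ _ (by omega), show n - 1 - (n - 1 - r) = r by omega] at this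

end Real

/-- **Willems' fundamental lemma (rank version).**  For a controllable system
`x_{k+1} = A x_k + B u_k`, if the input of an input-state trajectory of length
`T` is persistently exciting of order `n + L`, then the matrix obtained by
stacking the depth-`L` Hankel matrix of the input over the depth-`1` Hankel
matrix of the state has full row rank `L m + n`. -/
theorem fundamental_lemma_rank {n m : ℕ}
    (A : Matrix (Fin n) (Fin n) ℝ) (B : Matrix (Fin n) (Fin m) ℝ)
    (hctrb : (ctrbMatrix A B).rank = n)
    (T L : ℕ) (hL : 0 < L)
    (u : ℕ → Fin m → ℝ) (x : ℕ → Fin n → ℝ)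
    (htraj : ∀ k, k + 1 < T → x (k + 1) = A.mulVec (x k) + B.mulVec (u k))
    (hPE : PersistentlyExciting u T (n + L)) :
    (Matrix.fromRows (Hankel u L (T - L + 1)) (Hankel x 1 (T - L + 1))).rank
      = L * m + n := by
  have hq := hPE.sub_add_le hL fun hm => by
    simpa [hm, hctrb] using (ctrbMatrix A B).rank_le_card_width
  rw [show L * m + n = Fintype.card (Fin L × Fin m ⊕ Fin 1 × Fin n) by simp,
    rank_eq_card_iff_vecMul_eq_zero]
  intro v hv
  set η : ℕ → Fin m → ℝ := fun p s => if h : p < L then v (.inl (⟨p, h⟩, s)) else 0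
  set ζ : Fin n → ℝ := fun s => v (.inr (0, s))
  have hrel : ∀ j < T - L + 1, ∑ p ∈ range L, η p ⬝ᵥ u (j + p) + ζ ⬝ᵥ x j = 0 := fun j hj => by
    have hinl : v ∘ Sum.inl = fun ps => η ps.1 ps.2 := funext fun ps => by simp [η]
    have hinr : v ∘ Sum.inr = fun ps => (fun _ : ℕ => ζ) ps.1 ps.2 :=
      funext fun ⟨i, s⟩ => by rw [Subsingleton.elim i 0]; rfl
    have h := congrFun hv ⟨j, hj⟩
    rw [vecMul_fromRows, hinl, hinr, Pi.add_apply, vecMul_hankel_apply,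
      vecMul_hankel_apply x (fun _ => ζ)] at h
    simpa using h
  have hext := markovExtension_eq_zero hPE (fun k hk => htraj k (by omega)) hrel
    (fun p hp => funext fun s => dif_neg (not_lt.mpr hp)) hq
  have hζ : ζ = 0 := (ctrbMatrix A B).rank_eq_card_iff_vecMul_eq_zero.mp (by simpa using hctrb)
    ζ (vecMul_ctrbMatrix_eq_zero hext)
  funext r
  rcases r with ⟨⟨p, hp⟩, s⟩ | ⟨i, s⟩
  · simpa [markovExtension_add_dim, η, hp] using congrFun (hext (p + n)) s
  · simpa [Subsingleton.elim i 0] using congrFun hζ s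
end

section
/- Consider the system x_{k+1} = A x_k + B u_k + E w_k, y_k = C x_k, where A ∈ ℝ^{n×n} is Schur stable, the pair (A,B) is controllable, and the columns of C are linearly independent. Let (u_{[0,T−1]}, y_{[0,T]}) be an input-output trajectory generated with w_k = 0 for all k, and suppose u_{[0,T−1]} is persistently exciting of order n+1. Then for ANY matrix M ∈ ℝ^{T×m} satisfying Y^{diff}_{1,T} M = 0 and U_{1,T} M = I_m (with U_{1,T} = [u_0, …, u_{T−1}] and Y^{diff}_{1,T} = [y_1−y_0, …, y_T−y_{T−1}]), it holds that Y_{1,T} M = C(I−A)^{-1}B, where Y_{1,T} = [y_0, y_1, …, y_{T−1}] ∈ ℝ^{p×T}. In particular, the steady-state transfer function G = C(I−A)^{-1}B is determined by the data, independently of the choice of M. -/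
open Matrix

/-- **Data-driven characterization of the steady-state transfer function
(noise-free data).**  Given a noise-free input-output trajectory
`(u_{[0,T-1]}, y_{[0,T]})` of `x_{k+1} = A x_k + B u_k`, `y_k = C x_k`, with
`A` Schur stable, `(A,B)` controllable, `C` with linearly independent columns,
and `u` persistently exciting of order `n+1`, ANY matrix `M` satisfying
`Y^diff_{1,T} M = 0` and `U_{1,T} M = I` yields
`Y_{1,T} M = C (I - A)⁻¹ B = G`. -/
theorem transfer_function_from_noise_free_data {n m p : ℕ}
    (A : Matrix (Fin n) (Fin n) ℝ) (B : Matrix (Fin n) (Fin m) ℝ)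
    (C : Matrix (Fin p) (Fin n) ℝ)
    (hA : SchurStable A)
    (hctrb : (ctrbMatrix A B).rank = n)
    (hC : LinearIndependent ℝ (fun j : Fin n => fun i : Fin p => C i j))
    (T : ℕ)
    (u : ℕ → Fin m → ℝ) (y : ℕ → Fin p → ℝ)
    (htraj : ∃ x : ℕ → Fin n → ℝ,
      (∀ k, k < T → x (k + 1) = A.mulVec (x k) + B.mulVec (u k)) ∧
      (∀ k, k ≤ T → y k = C.mulVec (x k)))
    (hPE : PersistentlyExciting u T (n + 1))
    (M : Matrix (Fin T) (Fin m) ℝ)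
    (hM0 : (Matrix.of fun (i : Fin p) (j : Fin T) => y (j.1 + 1) i - y j.1 i) * M = 0)
    (hMI : (Matrix.of fun (i : Fin m) (j : Fin T) => u j.1 i) * M = 1) :
    (Matrix.of fun (i : Fin p) (j : Fin T) => y j.1 i) * M = C * (1 - A)⁻¹ * B := by
  obtain ⟨x, h1, h2⟩ := htraj
  -- invertibility of 1 - A from Schur stability
  have hdet : IsUnit (1 - A).det := by
    by_contra h
    have hdet0 : (1 - A).det = 0 := by
      by_contra h0
      exact h (isUnit_iff_ne_zero.mpr h0)
    set A' := A.map (algebraMap ℝ ℂ) with hA'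
    have hmap : (1 - A).map (algebraMap ℝ ℂ) = 1 - A' := by
      have h1m : (1 - A).map (algebraMap ℝ ℂ)
          = (1 : Matrix (Fin n) (Fin n) ℝ).map (algebraMap ℝ ℂ) - A' := by
        ext i j
        by_cases hij : i = j <;>
          simp [Matrix.map_apply, Matrix.sub_apply, hA', Matrix.one_apply, hij]
      rw [h1m, Matrix.map_one _ (map_zero _) (map_one _)]
    have hdetC : (1 - A').det = 0 := by
      have h4 := RingHom.map_det (algebraMap ℝ ℂ) (1 - A)
      rw [RingHom.mapMatrix_apply, hmap] at h4
      rw [← h4, hdet0, map_zero]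
    have hmem : (1 : ℂ) ∈ spectrum ℂ A' := by
      rw [spectrum.mem_iff]
      intro hu
      rw [_root_.map_one, Matrix.isUnit_iff_isUnit_det, hdetC] at hu
      exact one_ne_zero ((isUnit_zero_iff.mp hu).symm)
    have := hA 1 hmem
    simp at this
  -- C has injective multiplication (linearly independent columns)
  have hCinj : ∀ {q : ℕ} (Z : Matrix (Fin n) (Fin q) ℝ), C * Z = 0 → Z = 0 := by
    intro q Z hZ
    ext k j
    have hcol : ∀ i, ∑ l, Z l j * C i l = 0 := by
      intro i
      have := congrFun (congrFun hZ i) j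
      simpa [Matrix.mul_apply, mul_comm] using this
    have := Fintype.linearIndependent_iff.mp hC (fun l => Z l j) ?_ k
    · simpa using this
    · funext i
      simpa [Finset.sum_apply] using hcol i
  set U : Matrix (Fin m) (Fin T) ℝ := Matrix.of fun i j => u j.1 i with hU
  set X : Matrix (Fin n) (Fin T) ℝ := Matrix.of fun i j => x j.1 i with hX
  set X' : Matrix (Fin n) (Fin T) ℝ := Matrix.of fun i j => x (j.1 + 1) i with hX'
  have hst : X' = A * X + B * U := by
    ext i j
    have hx := congrFun (h1 j.1 j.2) i
    simpa [hX', hX, hU, Matrix.mul_apply, Matrix.mulVec, dotProduct,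
      Matrix.add_apply] using hx
  have hYd : (Matrix.of fun (i : Fin p) (j : Fin T) => y (j.1 + 1) i - y j.1 i)
      = C * X' - C * X := by
    ext i j
    have hy1 := h2 (j.1 + 1) j.2
    have hy0 := h2 j.1 j.2.le
    simp [hy1, hy0, hX', hX, Matrix.mul_apply, Matrix.mulVec, dotProduct,
      Matrix.sub_apply]
  have hdiff : (Matrix.of fun (i : Fin p) (j : Fin T) => y (j.1 + 1) i - y j.1 i)
      = C * ((A - 1) * X + B * U) := by
    have e1 : (A - 1) * X = A * X - X := by
      rw [Matrix.sub_mul, Matrix.one_mul]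
    rw [hYd, hst, e1, Matrix.mul_add, Matrix.mul_add, Matrix.mul_sub]
    abel
  have hzero : ((A - 1) * X + B * U) * M = 0 := by
    apply hCinj
    rw [← Matrix.mul_assoc, ← hdiff, hM0]
  have hXM : (1 - A) * (X * M) = B := by
    have h3 : (A - 1) * (X * M) + B * (U * M) = 0 := by
      rw [← Matrix.mul_assoc, ← Matrix.mul_assoc, ← Matrix.add_mul, hzero]
    rw [hMI, Matrix.mul_one] at h3
    have h5 : (A - 1) * (X * M) = -B := eq_neg_of_add_eq_zero_left h3
    have h6 : (1 - A) * (X * M) = -((A - 1) * (X * M)) := by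
      rw [← Matrix.neg_mul, neg_sub]
    rw [h6, h5, neg_neg]
  have hXMval : X * M = (1 - A)⁻¹ * B := by
    have := congrArg (fun Z => (1 - A)⁻¹ * Z) hXM
    simpa [← Matrix.mul_assoc, Matrix.nonsing_inv_mul _ hdet] using this
  have hYX : (Matrix.of fun (i : Fin p) (j : Fin T) => y j.1 i) = C * X := by
    ext i j
    have := h2 j.1 j.2.le
    simp [this, hX, Matrix.mul_apply, Matrix.mulVec, dotProduct]
  rw [hYX, Matrix.mul_assoc, hXMval, Matrix.mul_assoc]
end

section
/- (ISS with respect to compact sets.) Consider the system z_{k+1} = f(z_k, v_k), where f : ℝ^n × ℝ^m → ℝ^n is locally Lipschitz and (v_k)_{k≥0} is a bounded input sequence. Let 𝒜 ⊂ ℝ^n be a nonempty compact set that is forward invariant for the unforced system z_{k+1} = f(z_k, 0). Suppose there exist a continuous function V : ℝ^n → ℝ_{≥0}, class-𝒦_∞ functions α₁, α₂, α₃, and a class-𝒦 function σ such that for all z ∈ ℝ^n and v ∈ ℝ^m: (i) α₁(|z|_𝒜) ≤ V(z) ≤ α₂(|z|_𝒜), and (ii) V(f(z,v)) − V(z) ≤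 −α₃(|z|_𝒜) + σ(‖v‖). Then there exist a class-𝒦𝓛 function β and a class-𝒦 function γ such that every solution satisfies |z_k|_𝒜 ≤ β(|z_{k₀}|_𝒜, k − k₀) + γ(sup_{t ≥ k₀} ‖v_t‖) for all 0 ≤ k₀ ≤ k and all initial conditions z_{k₀} ∈ ℝ^n. -/
/-!
Along a trajectory, `W k = V (z k)` satisfies `W (k + 1) ≤ W k - ρ (W k) + s` with the rate
`ρ = min (α₃ ∘ α₂⁻¹) id` of class `𝒦∞` and the input level `s = σ (sup ‖v‖)`. With `b = ρ⁻¹ (2 s)`,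
`max (W k) (b + s)` is nonincreasing, and as long as `W` stays above `b + s + ε` it loses at least
`ρ ε / 2` per step. Taking `ε = ρ⁻¹ (3 α₂ (|z_{k₀}|_𝒜) / (k - k₀ + 1))` therefore gives
`W k ≤ b + s + ε`, and `α₁⁻¹`, which satisfies `α₁⁻¹ (x + y) ≤ α₁⁻¹ (2 x) + α₁⁻¹ (2 y)`, splits this
into the `𝒦𝓛` and the `𝒦` term.
-/

open Filter Metric

/-- A class-𝒦 function: continuous on `[0,∞)`, strictly increasing on `[0,∞)`,
and vanishing at `0`. -/
def ClassK (γ : ℝ → ℝ) : Prop :=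
  ContinuousOn γ (Set.Ici 0) ∧ StrictMonoOn γ (Set.Ici 0) ∧ γ 0 = 0

/-- A class-𝒦∞ function: class-𝒦 and unbounded. -/
def ClassKInf (γ : ℝ → ℝ) : Prop :=
  ClassK γ ∧ Tendsto γ atTop atTop

/-- A class-𝒦𝓛 function: continuous, strictly increasing in the first argument
with `β 0 s = 0`, decreasing in the second argument, and `β r s → 0` as
`s → ∞`. -/
def ClassKL (β : ℝ → ℝ → ℝ) : Prop :=
  ContinuousOn (Function.uncurry β) (Set.Ici 0 ×ˢ Set.Ici 0) ∧
  (∀ s, 0 ≤ s → StrictMonoOn (fun r => β r s) (Set.Ici 0)) ∧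
  (∀ s, 0 ≤ s → β 0 s = 0) ∧
  (∀ r, 0 ≤ r → AntitoneOn (fun s => β r s) (Set.Ici 0)) ∧
  (∀ r, 0 ≤ r → Tendsto (fun s => β r s) atTop (nhds 0))

open Set

namespace ClassK

variable {α β : ℝ → ℝ}

lemma monotoneOn (h : ClassK α) : MonotoneOn α (Ici 0) := h.2.1.monotoneOn

lemma nonneg (h : ClassK α) {x : ℝ} (hx : 0 ≤ x) : 0 ≤ α x := by
  simpa [h.2.2] using h.monotoneOn self_mem_Ici hx hx

lemma mapsTo (h : ClassK α) : MapsTo α (Ici 0) (Ici 0) := fun _ hx => h.nonneg hx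

lemma comp (hα : ClassK α) (hβ : ClassK β) : ClassK (fun x => α (β x)) :=
  ⟨hα.1.comp hβ.1 hβ.mapsTo, hα.2.1.comp hβ.2.1 hβ.mapsTo, by simp [hβ.2.2, hα.2.2]⟩

lemma min (hα : ClassK α) (hβ : ClassK β) : ClassK (fun x => min (α x) (β x)) :=
  ⟨ContinuousOn.inf hα.1 hβ.1,
    fun _ ha _ hb hab => min_lt_min (hα.2.1 ha hb hab) (hβ.2.1 ha hb hab), by simp [hα.2.2, hβ.2.2]⟩

lemma add (hα : ClassK α) (hβ : ClassK β) : ClassK (fun x => α x + β x) :=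
  ⟨ContinuousOn.add hα.1 hβ.1,
    fun _ ha _ hb hab => add_lt_add (hα.2.1 ha hb hab) (hβ.2.1 ha hb hab), by simp [hα.2.2, hβ.2.2]⟩

lemma const_mul (hα : ClassK α) {c : ℝ} (hc : 0 < c) : ClassK (fun x => c * α x) :=
  ⟨continuousOn_const.mul hα.1, fun _ ha _ hb hab => mul_lt_mul_of_pos_left (hα.2.1 ha hb hab) hc,
    by simp [hα.2.2]⟩

lemma map_add_le (h : ClassK α) {x y : ℝ} (hx : 0 ≤ x) (hy : 0 ≤ y) :
    α (x + y) ≤ α (2 * x) + α (2 * y) := by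
  rcases le_total x y with hxy | hyx
  · have := h.monotoneOn (show 0 ≤ x + y by positivity) (show 0 ≤ 2 * y by positivity) (by linarith)
    linarith [h.nonneg (show 0 ≤ 2 * x by positivity)]
  · have := h.monotoneOn (show 0 ≤ x + y by positivity) (show 0 ≤ 2 * x by positivity) (by linarith)
    linarith [h.nonneg (show 0 ≤ 2 * y by positivity)]

end ClassK

lemma classKInf_id : ClassKInf id :=
  ⟨⟨continuousOn_id, strictMono_id.strictMonoOn _, rfl⟩, tendsto_id⟩

namespace ClassKInf

variable {α β : ℝ → ℝ}

lemma comp (hα : ClassKInf α) (hβ : ClassKInf β) : ClassKInf (fun x => α (β x)) :=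
  ⟨hα.1.comp hβ.1, hα.2.comp hβ.2⟩

lemma min (hα : ClassKInf α) (hβ : ClassKInf β) : ClassKInf (fun x => min (α x) (β x)) :=
  ⟨hα.1.min hβ.1, tendsto_inf_atTop _ hα.2 hβ.2⟩

lemma surjOn (h : ClassKInf α) : SurjOn α (Ici 0) (Ici 0) := by
  intro y hy
  obtain ⟨b, hyb, hb⟩ := ((tendsto_atTop.1 h.2 y).and (eventually_ge_atTop 0)).exists
  obtain ⟨x, hx, rfl⟩ := intermediate_value_Icc hb (h.1.1.mono Icc_subset_Ici_self)
    ⟨h.1.2.2.symm ▸ hy, hyb⟩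
  exact ⟨x, hx.1, rfl⟩

lemma exists_inverse (h : ClassKInf α) :
    ∃ g, ClassKInf g ∧ (∀ x, 0 ≤ x → g (α x) = x) ∧ ∀ y, 0 ≤ y → α (g y) = y := by
  let e : Ici (0 : ℝ) ≃o Ici (0 : ℝ) :=
    StrictMono.orderIsoOfSurjective (h.1.mapsTo.restrict α (Ici 0) (Ici 0))
      (fun a b hab => h.1.2.1 a.2 b.2 hab) (h.1.mapsTo.restrict_surjective_iff.2 h.surjOn)
  let g : ℝ → ℝ := fun y => e.symm (projIci (0 : ℝ) y)
  have hgα : ∀ x, 0 ≤ x → g (α x) = x := fun x hx => by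
    simp only [g, projIci_of_mem (h.1.mapsTo hx)]
    exact congrArg Subtype.val (e.symm_apply_apply ⟨x, hx⟩)
  have hg_mono : Monotone g := fun a b hab => e.symm.monotone (monotone_projIci hab)
  refine ⟨g, ⟨⟨?_, ?_, ?_⟩, ?_⟩, hgα, fun y hy => ?_⟩
  · have hproj : Continuous (projIci (0 : ℝ)) :=
      (continuous_const.max continuous_id).subtype_mk _
    exact (continuous_subtype_val.comp (e.symm.continuous.comp hproj)).continuousOn
  · exact fun a ha b hb hab => e.symm.strictMono (strictMonoOn_projIci ha hb hab)
  · simpa [h.1.2.2] using hgα 0 le_rfl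
  · refine tendsto_atTop_atTop_of_monotone hg_mono fun b => ⟨α (max b 0), ?_⟩
    rw [hgα _ (le_max_right b 0)]
    exact le_max_left b 0
  · calc α (g y) = projIci (0 : ℝ) y := congrArg Subtype.val (e.apply_symm_apply _)
      _ = y := max_eq_right hy

end ClassKInf

namespace ClassKL

variable {β : ℝ → ℝ → ℝ}

lemma nonneg (h : ClassKL β) {r s : ℝ} (hr : 0 ≤ r) (hs : 0 ≤ s) : 0 ≤ β r s := by
  simpa [h.2.2.1 s hs] using (h.2.1 s hs).monotoneOn self_mem_Ici hr hr

end ClassKL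

lemma ClassK.comp_classKL {ψ : ℝ → ℝ} {β : ℝ → ℝ → ℝ} (hψ : ClassK ψ) (hβ : ClassKL β) :
    ClassKL (fun r s => ψ (β r s)) := by
  have hnn : ∀ {r s}, 0 ≤ r → 0 ≤ s → 0 ≤ β r s := hβ.nonneg
  obtain ⟨hcont, hmono, hzero, hanti, hlim⟩ := hβ
  refine ⟨hψ.1.comp hcont fun p hp => hnn hp.1 hp.2,
    fun s hs => hψ.2.1.comp (hmono s hs) fun r hr => hnn hr hs,
    fun s hs => by simp [hzero s hs, hψ.2.2],
    fun r hr a ha b hb hab => hψ.monotoneOn (hnn hr hb) (hnn hr ha)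
      (hanti r hr ha hb hab),
    fun r hr => ?_⟩
  have hlim' : Tendsto (fun s => β r s) atTop (nhdsWithin 0 (Ici 0)) :=
    tendsto_nhdsWithin_iff.2 ⟨hlim r hr, (eventually_ge_atTop 0).mono fun s hs => hnn hr hs⟩
  simpa [Function.comp_def, hψ.2.2] using (hψ.1 0 self_mem_Ici).tendsto.comp hlim'

lemma ClassK.classKL_div_succ {κ : ℝ → ℝ} (hκ : ClassK κ) : ClassKL (fun r s => κ r / (s + 1)) := by
  refine ⟨?_, fun s hs a ha b hb hab => ?_, fun s _ => by simp [hκ.2.2],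
    fun r hr a ha b hb hab => ?_, fun r _ => ?_⟩
  · refine ContinuousOn.div (hκ.1.comp continuousOn_fst fun p hp => hp.1)
      (continuousOn_snd.add continuousOn_const) fun p hp => ?_
    have : (0 : ℝ) ≤ p.2 := hp.2
    positivity
  · have : (0 : ℝ) < s + 1 := by linarith [show (0 : ℝ) ≤ s from hs]
    exact div_lt_div_of_pos_right (hκ.2.1 ha hb hab) this
  · have : (0 : ℝ) < a + 1 := by linarith [show (0 : ℝ) ≤ a from ha]
    exact div_le_div_of_nonneg_left (hκ.nonneg hr) this (by linarith)
  · simpa [div_eq_mul_inv] using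
      (tendsto_inv_atTop_zero.comp (tendsto_atTop_add_const_right atTop 1 tendsto_id)).const_mul
        (κ r)

section Dissipation

variable {ρ : ℝ → ℝ} {W : ℕ → ℝ} {b s : ℝ}

lemma dissipation_step_le_of_le (hρ : ClassK ρ) (hstep : ∀ j, W (j + 1) ≤ W j - ρ (W j) + s)
    (hb : 0 ≤ b) (hρb : 2 * s ≤ ρ b) {j : ℕ} (hj : b ≤ W j) :
    W (j + 1) ≤ W j - ρ (W j) / 2 := by
  have := hρ.monotoneOn hb (hb.trans hj) hj
  linarith [hstep j]

lemma antitone_max_of_dissipation (hρ : ClassK ρ) (hW : ∀ j, 0 ≤ W j)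
    (hstep : ∀ j, W (j + 1) ≤ W j - ρ (W j) + s) (hb : 0 ≤ b) (hρb : 2 * s ≤ ρ b) :
    Antitone fun j => max (W j) (b + s) := by
  refine antitone_nat_of_succ_le fun j => ?_
  have hρW := hρ.nonneg (hW j)
  rcases le_or_gt b (W j) with hj | hj
  · have := dissipation_step_le_of_le hρ hstep hb hρb hj
    exact max_le_max (by linarith) le_rfl
  · exact (max_le (by linarith [hstep j]) le_rfl).trans (le_max_right _ _)

lemma dissipation_le_of_two_mul_lt (hρ : ClassK ρ) (hW : ∀ j, 0 ≤ W j)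
    (hstep : ∀ j, W (j + 1) ≤ W j - ρ (W j) + s) (hb : 0 ≤ b) (hs : 0 ≤ s) (hρb : 2 * s ≤ ρ b)
    {N : ℕ} {ε : ℝ} (hε : 0 ≤ ε) (hN : 2 * W 0 < N * ρ ε) :
    W N ≤ b + s + ε := by
  by_contra! hlt
  have hlarge : ∀ j ≤ N, b + s + ε < W j := fun j hj => by
    have := (le_max_left _ _).trans (antitone_max_of_dissipation hρ hW hstep hb hρb hj)
    rcases le_max_iff.1 this with h | h <;> linarith
  have hdecay : ∀ j ≤ N, W j ≤ W 0 - j * (ρ ε / 2) := by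
    intro j
    induction j with
    | zero => simp
    | succ j ih =>
      intro hj
      have hWj := hlarge j (by omega)
      have h₁ := dissipation_step_le_of_le hρ hstep hb hρb (show b ≤ W j by linarith)
      have h₂ := hρ.monotoneOn hε (hW j) (show ε ≤ W j by linarith)
      push_cast
      linarith [ih (by omega)]
  linarith [hdecay N le_rfl, hW N]

lemma dissipation_le_of_three_mul_le (hρ : ClassK ρ) (hρ_le : ∀ x, ρ x ≤ x) (hW : ∀ j, 0 ≤ W j)
    (hstep : ∀ j, W (j + 1) ≤ W j - ρ (W j) + s) (hb : 0 ≤ b) (hs : 0 ≤ s) (hρb : 2 * s ≤ ρ b)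
    {N : ℕ} {ε : ℝ} (hε : 0 ≤ ε) (hN : 3 * W 0 ≤ (N + 1) * ρ ε) :
    W N ≤ b + s + ε := by
  by_cases h : W 0 ≤ ε
  · calc W N ≤ max (W N) (b + s) := le_max_left _ _
      _ ≤ max (W 0) (b + s) := antitone_max_of_dissipation hρ hW hstep hb hρb (Nat.zero_le N)
      _ ≤ b + s + ε := max_le (by linarith) (by linarith)
  · -- `ρ ε ≤ ε < W 0` turns `3 W 0 ≤ (N + 1) ρ ε` into `2 W 0 < N ρ ε`
    refine dissipation_le_of_two_mul_lt hρ hW hstep hb hs hρb hε ?_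
    linarith [hρ_le ε]

end Dissipation

lemma exists_classKInf_rate {α₂ α₃ : ℝ → ℝ} (hα₂ : ClassKInf α₂) (hα₃ : ClassKInf α₃) :
    ∃ ρ, ClassKInf ρ ∧ (∀ x, ρ x ≤ x) ∧ ∀ r y, 0 ≤ r → 0 ≤ y → y ≤ α₂ r → ρ y ≤ α₃ r := by
  obtain ⟨g₂, hg₂, hg₂α₂, -⟩ := hα₂.exists_inverse
  refine ⟨fun x => min (α₃ (g₂ x)) x, (hα₃.comp hg₂).min classKInf_id,
    fun x => min_le_right _ _, fun r y hr hy hyr => ?_⟩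
  calc min (α₃ (g₂ y)) y ≤ α₃ (g₂ y) := min_le_left _ _
    _ ≤ α₃ (g₂ (α₂ r)) := hα₃.1.monotoneOn (hg₂.1.nonneg hy) (hg₂.1.nonneg (hα₂.1.nonneg hr))
        (hg₂.1.monotoneOn hy (hα₂.1.nonneg hr) hyr)
    _ = α₃ r := by rw [hg₂α₂ r hr]

lemma dissipation_of_lyapunov {X U : Type*} [SeminormedAddCommGroup U] {f : X → U → X}
    {d V : X → ℝ} {ρ α₃ σ : ℝ → ℝ} (hσ : ClassK σ) (hρ : ∀ x, ρ (V x) ≤ α₃ (d x))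
    (hdecrease : ∀ x v, V (f x v) - V x ≤ -α₃ (d x) + σ ‖v‖) {v : ℕ → U} {z : ℕ → X}
    (hz : ∀ k, z (k + 1) = f (z k) (v k)) {w : ℝ} (hw : ∀ k, ‖v k‖ ≤ w) (k : ℕ) :
    V (z (k + 1)) ≤ V (z k) - ρ (V (z k)) + σ w := by
  have := hσ.monotoneOn (norm_nonneg _) ((norm_nonneg _).trans (hw 0)) (hw k)
  rw [hz]
  linarith [hdecrease (z k) (v k), hρ (z k)]

theorem exists_iss_estimate_of_lyapunov {X U : Type*} [SeminormedAddCommGroup U]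
    (f : X → U → X) (d : X → ℝ) (hd : ∀ x, 0 ≤ d x) (V : X → ℝ) (α₁ α₂ α₃ σ : ℝ → ℝ)
    (hα₁ : ClassKInf α₁) (hα₂ : ClassKInf α₂) (hα₃ : ClassKInf α₃) (hσ : ClassK σ)
    (hsandwich : ∀ x, α₁ (d x) ≤ V x ∧ V x ≤ α₂ (d x))
    (hdecrease : ∀ x v, V (f x v) - V x ≤ -α₃ (d x) + σ ‖v‖) :
    ∃ β : ℝ → ℝ → ℝ, ∃ γ : ℝ → ℝ, ClassKL β ∧ ClassK γ ∧
      ∀ v : ℕ → U, (∃ c, ∀ k, ‖v k‖ ≤ c) →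
      ∀ z : ℕ → X, (∀ k, z (k + 1) = f (z k) (v k)) →
      ∀ k₀ k : ℕ, k₀ ≤ k →
        d (z k) ≤ β (d (z k₀)) ((k - k₀ : ℕ) : ℝ) + γ (⨆ t : ℕ, ‖v (k₀ + t)‖) := by
  obtain ⟨g₁, hg₁, hg₁α₁, -⟩ := hα₁.exists_inverse
  obtain ⟨ρ, hρ, hρ_le, hρα₃⟩ := exists_classKInf_rate hα₂ hα₃
  obtain ⟨gρ, hgρ, -, hρgρ⟩ := hρ.exists_inverse
  have hV : ∀ x, 0 ≤ V x := fun x => (hα₁.1.nonneg (hd x)).trans (hsandwich x).1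
  refine ⟨fun r t => g₁ (2 * gρ (3 * α₂ r / (t + 1))), fun t => g₁ (2 * (gρ (2 * σ t) + σ t)),
    (hg₁.1.comp (hgρ.1.const_mul two_pos)).comp_classKL
      (hα₂.1.const_mul three_pos).classKL_div_succ,
    hg₁.1.comp (((hgρ.1.comp (hσ.const_mul two_pos)).add hσ).const_mul two_pos), ?_⟩
  rintro v ⟨c, hc⟩ z hz k₀ k hk
  obtain ⟨N, rfl⟩ := Nat.exists_eq_add_of_le hk
  rw [Nat.add_sub_cancel_left]
  set w := ⨆ t : ℕ, ‖v (k₀ + t)‖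
  have hs : 0 ≤ σ w := hσ.nonneg (Real.iSup_nonneg fun t => norm_nonneg _)
  have h2s : 0 ≤ 2 * σ w := by positivity
  have hb : 0 ≤ gρ (2 * σ w) := hgρ.1.nonneg h2s
  have hq : 0 ≤ 3 * α₂ (d (z k₀)) / (N + 1) := by have := hα₂.1.nonneg (hd (z k₀)); positivity
  set ε := gρ (3 * α₂ (d (z k₀)) / (N + 1))
  have hε : 0 ≤ ε := hgρ.1.nonneg hq
  have hstep := dissipation_of_lyapunov (z := fun j => z (k₀ + j)) (v := fun j => v (k₀ + j))
    hσ (fun x => hρα₃ _ _ (hd x) (hV x) (hsandwich x).2) hdecrease (fun j => hz (k₀ + j))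
    (w := w) (le_ciSup ⟨c, forall_mem_range.2 fun t => hc _⟩)
  have hVN : V (z (k₀ + N)) ≤ gρ (2 * σ w) + σ w + ε := by
    refine dissipation_le_of_three_mul_le (W := fun j => V (z (k₀ + j))) hρ.1 hρ_le
      (fun j => hV _) hstep hb hs (hρgρ _ h2s).ge hε ?_
    rw [hρgρ _ hq, mul_div_cancel₀ _ (by positivity)]
    simpa using (hsandwich (z k₀)).2
  calc d (z (k₀ + N)) = g₁ (α₁ (d (z (k₀ + N)))) := (hg₁α₁ _ (hd _)).symm
    _ ≤ g₁ (gρ (2 * σ w) + σ w + ε) := hg₁.1.monotoneOn (hα₁.1.nonneg (hd _))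
        (show 0 ≤ gρ (2 * σ w) + σ w + ε by positivity) ((hsandwich _).1.trans hVN)
    _ ≤ g₁ (2 * (gρ (2 * σ w) + σ w)) + g₁ (2 * ε) := hg₁.1.map_add_le (by positivity) hε
    _ = _ := add_comm _ _

theorem iss_wrt_compact_sets_general {n m : ℕ}
    (f : EuclideanSpace ℝ (Fin n) → EuclideanSpace ℝ (Fin m) → EuclideanSpace ℝ (Fin n))
    (𝒜 : Set (EuclideanSpace ℝ (Fin n)))
    (V : EuclideanSpace ℝ (Fin n) → ℝ)
    (α₁ α₂ α₃ σ : ℝ → ℝ)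
    (hα₁ : ClassKInf α₁) (hα₂ : ClassKInf α₂) (hα₃ : ClassKInf α₃) (hσ : ClassK σ)
    (hsandwich : ∀ z, α₁ (infDist z 𝒜) ≤ V z ∧ V z ≤ α₂ (infDist z 𝒜))
    (hdecrease : ∀ z v, V (f z v) - V z ≤ -α₃ (infDist z 𝒜) + σ ‖v‖) :
    ∃ β : ℝ → ℝ → ℝ, ∃ γ : ℝ → ℝ, ClassKL β ∧ ClassK γ ∧
      ∀ v : ℕ → EuclideanSpace ℝ (Fin m), (∃ c, ∀ k, ‖v k‖ ≤ c) →
      ∀ z : ℕ → EuclideanSpace ℝ (Fin n), (∀ k, z (k + 1) = f (z k) (v k)) →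
      ∀ k₀ k : ℕ, k₀ ≤ k →
        infDist (z k) 𝒜 ≤
          β (infDist (z k₀) 𝒜) ((k - k₀ : ℕ) : ℝ) + γ (⨆ t : ℕ, ‖v (k₀ + t)‖) :=
  exists_iss_estimate_of_lyapunov f (infDist · 𝒜) (fun _ => infDist_nonneg) V α₁ α₂ α₃ σ
    hα₁ hα₂ hα₃ hσ hsandwich hdecrease

/-- **ISS with respect to compact sets.**  For `z_{k+1} = f(z_k, v_k)` with `f`
locally Lipschitz, `𝒜` a nonempty compact set forward invariant for the
unforced system, and an ISS Lyapunov function `V`, there exist `β ∈ 𝒦𝓛` and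
`γ ∈ 𝒦` such that every solution with bounded input satisfies
`|z_k|_𝒜 ≤ β(|z_{k₀}|_𝒜, k - k₀) + γ(sup_{t ≥ k₀} ‖v_t‖)`. -/
theorem iss_wrt_compact_sets {n m : ℕ}
    (f : EuclideanSpace ℝ (Fin n) → EuclideanSpace ℝ (Fin m) → EuclideanSpace ℝ (Fin n))
    (hf : LocallyLipschitz (fun zv : EuclideanSpace ℝ (Fin n) × EuclideanSpace ℝ (Fin m) =>
      f zv.1 zv.2))
    (𝒜 : Set (EuclideanSpace ℝ (Fin n))) (h𝒜ne : 𝒜.Nonempty) (h𝒜cpt : IsCompact 𝒜)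
    (hinv : ∀ z ∈ 𝒜, f z 0 ∈ 𝒜)
    (V : EuclideanSpace ℝ (Fin n) → ℝ)
    (hVcont : Continuous V) (hVnonneg : ∀ z, 0 ≤ V z)
    (α₁ α₂ α₃ σ : ℝ → ℝ)
    (hα₁ : ClassKInf α₁) (hα₂ : ClassKInf α₂) (hα₃ : ClassKInf α₃) (hσ : ClassK σ)
    (hsandwich : ∀ z, α₁ (infDist z 𝒜) ≤ V z ∧ V z ≤ α₂ (infDist z 𝒜))
    (hdecrease : ∀ z v, V (f z v) - V z ≤ -α₃ (infDist z 𝒜) + σ ‖v‖) :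
    ∃ β : ℝ → ℝ → ℝ, ∃ γ : ℝ → ℝ, ClassKL β ∧ ClassK γ ∧
      ∀ v : ℕ → EuclideanSpace ℝ (Fin m), (∃ c, ∀ k, ‖v k‖ ≤ c) →
      ∀ z : ℕ → EuclideanSpace ℝ (Fin n), (∀ k, z (k + 1) = f (z k) (v k)) →
      ∀ k₀ k : ℕ, k₀ ≤ k →
        infDist (z k) 𝒜 ≤
          β (infDist (z k₀) 𝒜) ((k - k₀ : ℕ) : ℝ) + γ (⨆ t : ℕ, ‖v (k₀ + t)‖) :=
  iss_wrt_compact_sets_general f 𝒜 V α₁ α₂ α₃ σ hα₁ hα₂ hα₃ hσ hsandwich hdecrease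
end
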